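/- arXiv:2204.01650 — 2 statements merged into one kernel-verified Lean document; each statement's English description precedes it below -/
import Mathlib

section
/- Let p ≥ 2 be an integer. The ring R_p = ℂ[E,F,H,W]/I_p is a finite-dimensional ℂ-vector space of dimension 6p − 1. -/
open MvPolynomial

/-- The constant `C_p = (4p)^{2p-1} / ((2p-1)!)²`. -/
noncomputable def Cconst (p : ℕ) : ℂ :=
  (4 * p : ℂ) ^ (2 * p - 1) / ((2 * p - 1).factorial : ℂ) ^ 2

/-- The variables `E, F, H, W` of `ℂ[E,F,H,W]`. -/
noncomputable def Evar : MvPolynomial (Fin 4) ℂ := X 0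
noncomputable def Fvar : MvPolynomial (Fin 4) ℂ := X 1
noncomputable def Hvar : MvPolynomial (Fin 4) ℂ := X 2
noncomputable def Wvar : MvPolynomial (Fin 4) ℂ := X 3

/-- The ideal `I_p` of `ℂ[E,F,H,W]` generated by the ten defining polynomials. -/
noncomputable def Ip (p : ℕ) : Ideal (MvPolynomial (Fin 4) ℂ) :=
  Ideal.span
    { Wvar ^ (3 * p - 1), Evar ^ 2, Fvar ^ 2, Evar * Hvar, Fvar * Hvar,
      Wvar ^ p * Evar, Wvar ^ p * Fvar, Wvar ^ p * Hvar,
      Hvar ^ 2 - C (Cconst p) * Wvar ^ (2 * p - 1),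
      Evar * Fvar + C (Cconst p) * Wvar ^ (2 * p - 1) }

/-!
`R_p` is spanned by the classes of `W^j` (`j < 3p - 1`) and `L W^j` (`L ∈ {E, F, H}`, `j < p`):
their span contains `1` and is stable under multiplication by the variables, since `W^p L = 0`
and the product of two letters is a multiple of `W^{2p-1}`.

These `6p - 1` classes are independent because `R_p` is Gorenstein with socle `W^{3p-2}`. The
functional `λ` reading off the socle coordinate (`W^{3p-2} ↦ 1`, `H² W^{p-1} ↦ C_p`,
`E F W^{p-1} ↦ -C_p`, other monomials `↦ 0`) vanishes on `I_p`, and `(x, y) ↦ λ(x y)` pairs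
`W^j, E W^j, F W^j, H W^j` with `W^{3p-2-j}, F W^{p-1-j}, E W^{p-1-j}, H W^{p-1-j}` diagonally,
with nonzero diagonal entries.
-/

theorem MvPolynomial.span_eq_top_of_one_mem_of_mul_mem {σ R A ι : Type*} [CommSemiring R]
    [CommSemiring A] [Algebra R A] {x : σ → A} (hx : Function.Surjective (aeval (R := R) x))
    {v : ι → A} (h1 : 1 ∈ Submodule.span R (Set.range v))
    (hmul : ∀ i j, x i * v j ∈ Submodule.span R (Set.range v)) :
    Submodule.span R (Set.range v) = ⊤ := by
  set V := Submodule.span R (Set.range v)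
  have hV (i : σ) : V ≤ V.comap (LinearMap.mulLeft R (x i)) :=
    Submodule.span_le.mpr <| Set.range_subset_iff.mpr (hmul i)
  have key (f : MvPolynomial σ R) : ∀ y ∈ V, aeval x f * y ∈ V := by
    induction f using MvPolynomial.induction_on with
    | C a => intro y hy; simpa [Algebra.smul_def] using V.smul_mem a hy
    | add f g hf hg => intro y hy; simpa [add_mul] using V.add_mem (hf y hy) (hg y hy)
    | mul_X f i hf => intro y hy; simpa [mul_assoc] using hf _ (hV i hy)
  refine Submodule.eq_top_iff'.mpr fun a => ?_
  obtain ⟨f, rfl⟩ := hx a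
  simpa using key f 1 h1

theorem LinearMap.map_eq_zero_of_mem_ideal_span {R A M : Type*} [CommSemiring R]
    [CommSemiring A] [Algebra R A] [AddCommMonoid M] [Module R M] (φ : A →ₗ[R] M) {S : Set A}
    (hS : ∀ s ∈ S, ∀ a, φ (a * s) = 0) {x : A} (hx : x ∈ Ideal.span S) : φ x = 0 := by
  suffices ∀ a, φ (a * x) = 0 by simpa using this 1
  induction hx using Submodule.span_induction with
  | mem s hs => exact hS s hs
  | zero => simp
  | add y z _ _ hy hz => intro a; rw [mul_add, map_add, hy, hz, add_zero]
  | smul b y _ hy => intro a; rw [smul_eq_mul, ← mul_assoc, hy]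

theorem linearIndependent_mk_of_pairing {K A ι : Type*} [Field K] [CommRing A] [Algebra K A]
    {I : Ideal A} (φ : A →ₗ[K] K) (hφ : ∀ x ∈ I, φ x = 0) (b b' : ι → A)
    (hb : ∀ i k, φ (b' k * b i) = 0 ↔ i ≠ k) :
    LinearIndependent K (Ideal.Quotient.mk I ∘ b) := by
  classical
  refine linearIndependent_iff'.mpr fun s g hg k hk => ?_
  have hmem : ∑ i ∈ s, g i • b i ∈ I := by
    rw [← Ideal.Quotient.eq_zero_iff_mem, ← Ideal.Quotient.mkₐ_eq_mk K, map_sum]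
    simpa [map_smul] using hg
  have h := hφ _ (I.mul_mem_left (b' k) hmem)
  rw [Finset.mul_sum, map_sum, Finset.sum_eq_single k] at h
  · rw [mul_smul_comm, map_smul, smul_eq_mul] at h
    exact (mul_eq_zero.mp h).resolve_right fun h0 => (hb k k).mp h0 rfl
  · intro i _ hik
    rw [mul_smul_comm, map_smul, (hb i k).mpr hik, smul_zero]
  · exact fun hks => absurd hk hks

lemma Cconst_ne_zero {p : ℕ} (hp : 0 < p) : Cconst p ≠ 0 := by
  have hp' : (p : ℂ) ≠ 0 := Nat.cast_ne_zero.mpr hp.ne'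
  have hfac : ((2 * p - 1).factorial : ℂ) ≠ 0 := Nat.cast_ne_zero.mpr (Nat.factorial_ne_zero _)
  exact div_ne_zero (pow_ne_zero _ (mul_ne_zero (by norm_num) hp')) (pow_ne_zero _ hfac)

noncomputable def letter : Fin 3 → MvPolynomial (Fin 4) ℂ := ![Evar, Fvar, Hvar]

noncomputable def letterForm (p : ℕ) : Fin 3 → Fin 3 → ℂ :=
  ![![0, -Cconst p, 0], ![-Cconst p, 0, 0], ![0, 0, Cconst p]]

lemma X_last : (X (Fin.last 3) : MvPolynomial (Fin 4) ℂ) = Wvar := rfl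

lemma X_castSucc (t : Fin 3) : (X t.castSucc : MvPolynomial (Fin 4) ℂ) = letter t := by
  fin_cases t <;> rfl

namespace Ip

def generators (p : ℕ) : Set (MvPolynomial (Fin 4) ℂ) :=
  { Wvar ^ (3 * p - 1), Evar ^ 2, Fvar ^ 2, Evar * Hvar, Fvar * Hvar,
    Wvar ^ p * Evar, Wvar ^ p * Fvar, Wvar ^ p * Hvar,
    Hvar ^ 2 - C (Cconst p) * Wvar ^ (2 * p - 1),
    Evar * Fvar + C (Cconst p) * Wvar ^ (2 * p - 1) }

variable {p : ℕ}

lemma mem_of_mem_generators {g : MvPolynomial (Fin 4) ℂ} (hg : g ∈ generators p) : g ∈ Ip p :=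
  Ideal.subset_span hg

local notation "mk" => Ideal.Quotient.mk (Ip p)

lemma mk_W_pow_eq_zero {n : ℕ} (hn : 3 * p - 1 ≤ n) : mk Wvar ^ n = 0 := by
  rw [← map_pow, Ideal.Quotient.eq_zero_iff_mem]
  exact (Ip p).pow_mem_of_pow_mem (mem_of_mem_generators (by simp [generators])) hn

lemma mk_W_pow_mul_letter (t : Fin 3) : mk Wvar ^ p * mk (letter t) = 0 := by
  rw [← map_pow, ← map_mul, Ideal.Quotient.eq_zero_iff_mem]
  fin_cases t <;> exact mem_of_mem_generators (by simp [generators, letter])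

lemma mk_letter_mul_letter (s t : Fin 3) :
    mk (letter s) * mk (letter t) = letterForm p s t • mk Wvar ^ (2 * p - 1) := by
  rw [← map_pow, ← Ideal.Quotient.mkₐ_eq_mk ℂ, ← map_smul, ← map_mul, smul_eq_C_mul,
    Ideal.Quotient.mkₐ_eq_mk, Ideal.Quotient.eq]
  fin_cases s <;> fin_cases t <;>
    exact mem_of_mem_generators (by simp [generators, letter, letterForm, sq, mul_comm])

end Ip

noncomputable def socleWeight (p : ℕ) (e : Fin 4 →₀ ℕ) : ℂ :=
  if e 0 = 0 ∧ e 1 = 0 ∧ e 2 = 0 ∧ e 3 = 3 * p - 2 then 1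
  else if e 0 = 0 ∧ e 1 = 0 ∧ e 2 = 2 ∧ e 3 = p - 1 then Cconst p
  else if e 0 = 1 ∧ e 1 = 1 ∧ e 2 = 0 ∧ e 3 = p - 1 then -Cconst p
  else 0

noncomputable def socleFunctional (p : ℕ) : MvPolynomial (Fin 4) ℂ →ₗ[ℂ] ℂ :=
  (basisMonomials (Fin 4) ℂ).constr ℂ (socleWeight p)

section socleFunctional

variable {p : ℕ}

lemma socleFunctional_monomial (e : Fin 4 →₀ ℕ) (a : ℂ) :
    socleFunctional p (monomial e a) = a * socleWeight p e := by
  rw [← smul_eq_mul, ← Module.Basis.constr_basis (basisMonomials (Fin 4) ℂ) ℂ (socleWeight p) e,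
    coe_basisMonomials, ← map_smul, smul_monomial, smul_eq_mul, mul_one]
  rfl

lemma socleFunctional_mul_generator (hp : 0 < p) {g : MvPolynomial (Fin 4) ℂ}
    (hg : g ∈ Ip.generators p) (f : MvPolynomial (Fin 4) ℂ) : socleFunctional p (f * g) = 0 := by
  induction f using induction_on' with
  | monomial u a =>
    rcases hg with rfl | rfl | rfl | rfl | rfl | rfl | rfl | rfl | rfl | rfl <;>
    simp only [Evar, Fvar, Hvar, Wvar, X, monomial_pow, monomial_mul, C_mul_monomial, mul_sub,
      mul_add, map_sub, map_add, socleFunctional_monomial, socleWeight, Finsupp.add_apply,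
      Finsupp.smul_apply, Finsupp.single_apply, Fin.isValue, Fin.reduceEq, ↓reduceIte, add_zero,
      zero_add, smul_eq_mul, mul_one, mul_zero] <;>
    split_ifs <;> first | ring1 | omega | tauto
  | add f g hf hg => rw [add_mul, map_add, hf, hg, add_zero]

lemma socleFunctional_eq_zero_of_mem (hp : 0 < p) {x : MvPolynomial (Fin 4) ℂ} (hx : x ∈ Ip p) :
    socleFunctional p x = 0 :=
  (socleFunctional p).map_eq_zero_of_mem_ideal_span
    (fun _ hg f => socleFunctional_mul_generator hp hg f) hx

lemma socleFunctional_W_pow (n : ℕ) :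
    socleFunctional p (Wvar ^ n) = if n = 3 * p - 2 then 1 else 0 := by
  simp [Wvar, X, monomial_pow, socleFunctional_monomial, socleWeight]

lemma socleFunctional_letter_mul_W_pow (t : Fin 3) (n : ℕ) :
    socleFunctional p (letter t * Wvar ^ n) = 0 := by
  fin_cases t <;>
    simp [letter, Evar, Fvar, Hvar, Wvar, X, monomial_pow, monomial_mul, socleFunctional_monomial,
      socleWeight]

lemma socleFunctional_letter_mul_letter_mul_W_pow (s t : Fin 3) (n : ℕ) :
    socleFunctional p (letter s * letter t * Wvar ^ n) =
      if n = p - 1 then letterForm p s t else 0 := by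
  fin_cases s <;> fin_cases t <;>
    simp [letter, letterForm, Evar, Fvar, Hvar, Wvar, X, monomial_pow, monomial_mul,
      socleFunctional_monomial, socleWeight]

end socleFunctional

abbrev StdIndex (p : ℕ) : Type := Fin (3 * p - 1) ⊕ Fin 3 × Fin p

noncomputable def stdMonomial (p : ℕ) : StdIndex p → MvPolynomial (Fin 4) ℂ
  | .inl n => Wvar ^ (n : ℕ)
  | .inr (t, n) => letter t * Wvar ^ (n : ℕ)

noncomputable def dualMonomial (p : ℕ) : StdIndex p → MvPolynomial (Fin 4) ℂ
  | .inl n => Wvar ^ (n.rev : ℕ)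
  | .inr (t, n) => letter (Equiv.swap 0 1 t) * Wvar ^ (n.rev : ℕ)

lemma letterForm_swap_eq_zero_iff {p : ℕ} (hp : 0 < p) (s t : Fin 3) :
    letterForm p (Equiv.swap 0 1 s) t = 0 ↔ t ≠ s := by
  fin_cases s <;> fin_cases t <;> simp [letterForm, Cconst_ne_zero hp, Equiv.swap_apply_of_ne_of_ne]

lemma socleFunctional_dualMonomial_mul_stdMonomial_eq_zero_iff {p : ℕ} (hp : 0 < p)
    (i k : StdIndex p) :
    socleFunctional p (dualMonomial p k * stdMonomial p i) = 0 ↔ i ≠ k := by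
  rcases i with n | ⟨t, n⟩ <;> rcases k with m | ⟨s, m⟩ <;>
    simp only [dualMonomial, stdMonomial]
  · rw [← pow_add, socleFunctional_W_pow, Fin.val_rev]
    simp only [ite_eq_right_iff, one_ne_zero, imp_false, ne_eq, Sum.inl.injEq, Fin.ext_iff]
    omega
  · rw [mul_assoc, ← pow_add, socleFunctional_letter_mul_W_pow]
    simp
  · rw [mul_left_comm, ← pow_add, socleFunctional_letter_mul_W_pow]
    simp
  · rw [mul_mul_mul_comm, ← pow_add, socleFunctional_letter_mul_letter_mul_W_pow, Fin.val_rev]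
    split_ifs with h
    · obtain rfl : n = m := Fin.ext (by omega)
      rw [letterForm_swap_eq_zero_iff hp]
      simp
    · have hnm : n ≠ m := fun hnm => h (by rw [hnm]; omega)
      simp [hnm]

lemma linearIndependent_stdMonomial {p : ℕ} (hp : 0 < p) :
    LinearIndependent ℂ (Ideal.Quotient.mk (Ip p) ∘ stdMonomial p) :=
  linearIndependent_mk_of_pairing (socleFunctional p) (fun _ => socleFunctional_eq_zero_of_mem hp)
    (stdMonomial p) (dualMonomial p) (socleFunctional_dualMonomial_mul_stdMonomial_eq_zero_iff hp)

namespace Ip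

variable {p : ℕ}

local notation "mk" => Ideal.Quotient.mk (Ip p)

lemma mk_W_pow_mem_span (n : ℕ) :
    mk Wvar ^ n ∈ Submodule.span ℂ (Set.range (mk ∘ stdMonomial p)) := by
  by_cases hn : n < 3 * p - 1
  · exact Submodule.subset_span ⟨.inl ⟨n, hn⟩, by simp [stdMonomial]⟩
  · rw [mk_W_pow_eq_zero (not_lt.mp hn)]
    exact zero_mem _

lemma mk_letter_mul_W_pow_mem_span (t : Fin 3) (n : ℕ) :
    mk (letter t) * mk Wvar ^ n ∈ Submodule.span ℂ (Set.range (mk ∘ stdMonomial p)) := by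
  by_cases hn : n < p
  · exact Submodule.subset_span ⟨.inr (t, ⟨n, hn⟩), by simp [stdMonomial]⟩
  · obtain ⟨k, rfl⟩ := Nat.exists_eq_add_of_le (not_lt.mp hn)
    rw [show mk (letter t) * mk Wvar ^ (p + k) = mk Wvar ^ k * (mk Wvar ^ p * mk (letter t)) by
      ring, mk_W_pow_mul_letter, mul_zero]
    exact zero_mem _

lemma span_stdMonomial_eq_top : Submodule.span ℂ (Set.range (mk ∘ stdMonomial p)) = ⊤ := by
  have hsurj : Function.Surjective (aeval (R := ℂ) fun i => mk (X i)) := by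
    rw [show aeval (R := ℂ) (fun i => mk (X i)) = Ideal.Quotient.mkₐ ℂ (Ip p) by ext; simp]
    exact Ideal.Quotient.mkₐ_surjective ℂ _
  refine span_eq_top_of_one_mem_of_mul_mem hsurj (by simpa using mk_W_pow_mem_span 0) ?_
  intro i j
  induction i using Fin.lastCases with
  | last =>
    rw [X_last]
    rcases j with n | ⟨t, n⟩
    · simpa [stdMonomial, pow_succ'] using mk_W_pow_mem_span (n + 1)
    · simpa [stdMonomial, pow_succ', mul_left_comm] using mk_letter_mul_W_pow_mem_span t (n + 1)
  | cast s =>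
    rw [X_castSucc]
    rcases j with n | ⟨t, n⟩
    · simpa [stdMonomial] using mk_letter_mul_W_pow_mem_span s n
    · simp only [Function.comp_apply, stdMonomial, map_mul, map_pow]
      rw [← mul_assoc, mk_letter_mul_letter, smul_mul_assoc, ← pow_add]
      exact Submodule.smul_mem _ _ (mk_W_pow_mem_span _)

end Ip

/-- `R_p = ℂ[E,F,H,W]/I_p` is a finite-dimensional ℂ-vector space
of dimension `6p - 1`. -/
theorem stmt_3 (p : ℕ) (hp : 2 ≤ p) :
    FiniteDimensional ℂ (MvPolynomial (Fin 4) ℂ ⧸ Ip p) ∧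
      Module.finrank ℂ (MvPolynomial (Fin 4) ℂ ⧸ Ip p) = 6 * p - 1 := by
  let b := Module.Basis.mk (linearIndependent_stdMonomial (by omega : 0 < p))
    Ip.span_stdMonomial_eq_top.ge
  refine ⟨Module.Finite.of_basis b, ?_⟩
  rw [Module.finrank_eq_card_basis b, Fintype.card_sum, Fintype.card_prod, Fintype.card_fin,
    Fintype.card_fin, Fintype.card_fin]
  omega
end

section
/- Let p ≥ 2 be an integer. The algebra B_p is a finite-dimensional ℂ-vector space of dimension 8p − 6; a ℂ-basis is given by the 2p idempotents e_s^±, the 4(p−1) elements a_{s,1}, a_{s,2}, b_{s,1}, b_{s,2} (1 ≤ s ≤ p−1), and the 2(p−1) elements b_{s,2}a_{s,1} and a_{s,2}b_{s,1} (1 ≤ s ≤ p−1). -/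
open FreeAlgebra CategoryTheory

/-- Generators of the algebra `B_p`: idempotents `e_s^±` (the sign `+` is encoded by `true`
and `-` by `false`) and arrows `a_{s,i}`, `b_{s,i}` (the indices `1, 2` are encoded by
`0, 1 : Fin 2`). -/
inductive BGen (p : ℕ) : Type
  | e : Fin p → Bool → BGen p
  | a : Fin (p - 1) → Fin 2 → BGen p
  | b : Fin (p - 1) → Fin 2 → BGen p

/-- The inclusion `Fin (p-1) → Fin p`. -/
def finIncl {p : ℕ} (s : Fin (p - 1)) : Fin p := Fin.castLE (Nat.sub_le p 1) s

/-- The generators, as elements of the free algebra. -/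
noncomputable def gE (p : ℕ) (s : Fin p) (σ : Bool) : FreeAlgebra ℂ (BGen p) :=
  ι ℂ (BGen.e s σ)

noncomputable def gA (p : ℕ) (s : Fin (p - 1)) (i : Fin 2) : FreeAlgebra ℂ (BGen p) :=
  ι ℂ (BGen.a s i)

noncomputable def gB (p : ℕ) (s : Fin (p - 1)) (i : Fin 2) : FreeAlgebra ℂ (BGen p) :=
  ι ℂ (BGen.b s i)

/-- The defining relations of `B_p`: the `e`'s are pairwise orthogonal idempotents whose sum
is `1`; `a_{s,i} = e_s⁻ a_{s,i} e_s⁺` and `b_{s,i} = e_s⁺ b_{s,i} e_s⁻` for all `s, i`; and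
`b_{s,1}a_{s,1} = b_{s,2}a_{s,2} = 0`, `b_{s,2}a_{s,1} = b_{s,1}a_{s,2}`,
`a_{s,1}b_{s,1} = a_{s,2}b_{s,2} = 0`, `a_{s,2}b_{s,1} = a_{s,1}b_{s,2}`. -/
inductive BRel (p : ℕ) : FreeAlgebra ℂ (BGen p) → FreeAlgebra ℂ (BGen p) → Prop
  | orth (s t : Fin p) (σ τ : Bool) :
      BRel p (gE p s σ * gE p t τ) (if s = t ∧ σ = τ then gE p s σ else 0)
  | sum_eq_one : BRel p (∑ s : Fin p, (gE p s true + gE p s false)) 1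
  | a_sandwich (s : Fin (p - 1)) (i : Fin 2) :
      BRel p (gA p s i) (gE p (finIncl s) false * gA p s i * gE p (finIncl s) true)
  | b_sandwich (s : Fin (p - 1)) (i : Fin 2) :
      BRel p (gB p s i) (gE p (finIncl s) true * gB p s i * gE p (finIncl s) false)
  | ba_11 (s : Fin (p - 1)) : BRel p (gB p s 0 * gA p s 0) 0
  | ba_22 (s : Fin (p - 1)) : BRel p (gB p s 1 * gA p s 1) 0
  | ba_21 (s : Fin (p - 1)) : BRel p (gB p s 1 * gA p s 0) (gB p s 0 * gA p s 1)
  | ab_11 (s : Fin (p - 1)) : BRel p (gA p s 0 * gB p s 0) 0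
  | ab_22 (s : Fin (p - 1)) : BRel p (gA p s 1 * gB p s 1) 0
  | ab_21 (s : Fin (p - 1)) : BRel p (gA p s 1 * gB p s 0) (gA p s 0 * gB p s 1)

/-- The algebra `B_p`, presented by the above generators and relations. -/
abbrev Balg (p : ℕ) : Type := RingQuot (BRel p)

/-- The images of the generators in `B_p`. -/
noncomputable def bE (p : ℕ) (s : Fin p) (σ : Bool) : Balg p :=
  RingQuot.mkAlgHom ℂ (BRel p) (gE p s σ)

noncomputable def bA (p : ℕ) (s : Fin (p - 1)) (i : Fin 2) : Balg p :=
  RingQuot.mkAlgHom ℂ (BRel p) (gA p s i)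

noncomputable def bB (p : ℕ) (s : Fin (p - 1)) (i : Fin 2) : Balg p :=
  RingQuot.mkAlgHom ℂ (BRel p) (gB p s i)


/-- The index set of the claimed basis of `B_p`: the `2p` idempotents `e_s^±`, the `4(p-1)`
arrows `a_{s,1}, a_{s,2}, b_{s,1}, b_{s,2}`, and the `2(p-1)` paths `b_{s,2}a_{s,1}` and
`a_{s,2}b_{s,1}`. -/
inductive BIdx (p : ℕ) : Type
  | e : Fin p → Bool → BIdx p
  | a : Fin (p - 1) → Fin 2 → BIdx p
  | b : Fin (p - 1) → Fin 2 → BIdx p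
  | ba : Fin (p - 1) → BIdx p
  | ab : Fin (p - 1) → BIdx p

/-- The claimed basis vectors of `B_p`. -/
noncomputable def basisElt (p : ℕ) : BIdx p → Balg p
  | .e s σ => bE p s σ
  | .a s i => bA p s i
  | .b s i => bB p s i
  | .ba s => bB p s 1 * bA p s 0
  | .ab s => bA p s 1 * bB p s 0

/-!
The paths `e_v`, `a_{s,i}`, `b_{s,i}`, `b_{s,2}a_{s,1}`, `a_{s,2}b_{s,1}` span `B_p`: their span
contains `1 = ∑ e_v` and, by the multiplication table that the relations force, is stable under
left multiplication by the generators. They are independent because the same multiplication table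
defines a representation of `B_p` on the vector space with the paths as basis (the defining
relations are checked on the resulting matrices), and in it `x ↦ x • ∑ e_v` sends each path to its
basis vector.
-/

deriving instance DecidableEq for BIdx
deriving instance Fintype for BIdx

namespace Matrix

variable {ι R : Type*} [DecidableEq ι] [Semiring R]

def ofPartialMap (f : ι → Option ι) : Matrix ι ι R :=
  of fun j k => if f k = some j then 1 else 0

theorem ofPartialMap_mul [Fintype ι] (f g : ι → Option ι) :
    (ofPartialMap f * ofPartialMap g : Matrix ι ι R) = ofPartialMap fun k => (g k).bind f := by
  ext j k
  rcases h : g k with _ | l <;> simp [ofPartialMap, mul_apply, h]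

theorem ofPartialMap_none : (ofPartialMap (fun _ => none) : Matrix ι ι R) = 0 := by
  ext; simp [ofPartialMap]

theorem sum_ofPartialMap_fiber [Fintype ι] {κ : Type*} [Fintype κ] [DecidableEq κ] (π : ι → κ) :
    ∑ c, (ofPartialMap (fun k => if π k = c then some k else none) : Matrix ι ι R) = 1 := by
  ext j k
  by_cases hjk : j = k
  · subst hjk; simp [ofPartialMap, sum_apply]
  · simp [ofPartialMap, sum_apply, hjk, Ne.symm hjk]

theorem ofPartialMap_mulVec_single [Fintype ι] (f : ι → Option ι) (k : ι) :
    (ofPartialMap f : Matrix ι ι R) *ᵥ Pi.single k 1 = (f k).elim 0 fun m => Pi.single m 1 := by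
  ext j
  rcases h : f k with _ | m
  · simp [ofPartialMap, h]
  · simp [ofPartialMap, h, Pi.single_apply, eq_comm]

end Matrix

theorem Submodule.eq_top_of_one_mem_of_mul_mem {R A : Type*} [CommSemiring R] [Semiring A]
    [Algebra R A] {s : Set A} (hs : Algebra.adjoin R s = ⊤) {M : Submodule R A}
    (one_mem : 1 ∈ M) (mul_mem : ∀ x ∈ s, ∀ m ∈ M, x * m ∈ M) : M = ⊤ := by
  rw [eq_top_iff]
  rintro a -
  have ha : a ∈ Algebra.adjoin R s := hs ▸ Algebra.mem_top
  suffices ∀ m ∈ M, a * m ∈ M by simpa using this 1 one_mem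
  induction ha using Algebra.adjoin_induction with
  | mem x hx => exact mul_mem x hx
  | algebraMap r => exact fun m hm => (Algebra.smul_def r m).symm ▸ M.smul_mem r hm
  | add x y _ _ hx hy => exact fun m hm => (add_mul x y m).symm ▸ M.add_mem (hx m hm) (hy m hm)
  | mul x y _ _ hx hy => exact fun m hm => (mul_assoc x y m).symm ▸ hx _ (hy m hm)

open Matrix

@[simp]
theorem finIncl_inj {p : ℕ} {s t : Fin (p - 1)} : finIncl s = finIncl t ↔ s = t :=
  Fin.castLE_inj

namespace BIdx

variable {p : ℕ}

-- The vertices with `basisElt p k = e_{tgt k} * basisElt p k * e_{src k}`.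
def tgt : BIdx p → Fin p × Bool
  | .e s σ => (s, σ)
  | .a s _ | .ab s => (finIncl s, false)
  | .b s _ | .ba s => (finIncl s, true)

def src : BIdx p → Fin p × Bool
  | .e s σ => (s, σ)
  | .a s _ | .ba s => (finIncl s, true)
  | .b s _ | .ab s => (finIncl s, false)

def equivSum (p : ℕ) : BIdx p ≃ (Fin p × Bool) ⊕ (Fin (p - 1) × Fin 2) ⊕
    (Fin (p - 1) × Fin 2) ⊕ Fin (p - 1) ⊕ Fin (p - 1) where
  toFun
    | .e s σ => .inl (s, σ)
    | .a s i => .inr (.inl (s, i))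
    | .b s i => .inr (.inr (.inl (s, i)))
    | .ba s => .inr (.inr (.inr (.inl s)))
    | .ab s => .inr (.inr (.inr (.inr s)))
  invFun
    | .inl (s, σ) => .e s σ
    | .inr (.inl (s, i)) => .a s i
    | .inr (.inr (.inl (s, i))) => .b s i
    | .inr (.inr (.inr (.inl s))) => .ba s
    | .inr (.inr (.inr (.inr s))) => .ab s
  left_inv k := by cases k <;> rfl
  right_inv x := by rcases x with ⟨s, σ⟩ | ⟨s, i⟩ | ⟨s, i⟩ | s | s <;> rfl

theorem card_eq (p : ℕ) : Fintype.card (BIdx p) = 8 * p - 6 := by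
  simp only [Fintype.card_congr (equivSum p), Fintype.card_sum, Fintype.card_prod,
    Fintype.card_fin, Fintype.card_bool]
  omega

end BIdx

namespace BGen

variable {p : ℕ}

/-- Left multiplication of a path by a generator; `none` stands for the product `0`. -/
def act : BGen p → BIdx p → Option (BIdx p)
  | .e s σ, k => if k.tgt = (s, σ) then some k else none
  | .a s i, .e t τ => if (t, τ) = (finIncl s, true) then some (.a s i) else none
  | .a s i, .b t j => if t = s ∧ i ≠ j then some (.ab s) else none
  | .a _ _, _ => none
  | .b s i, .e t τ => if (t, τ) = (finIncl s, false) then some (.b s i) else none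
  | .b s i, .a t j => if t = s ∧ i ≠ j then some (.ba s) else none
  | .b _ _, _ => none

noncomputable def freePathRep (p : ℕ) :
    FreeAlgebra ℂ (BGen p) →ₐ[ℂ] Matrix (BIdx p) (BIdx p) ℂ :=
  FreeAlgebra.lift ℂ fun g => ofPartialMap g.act

theorem freePathRep_ι (g : BGen p) : freePathRep p (FreeAlgebra.ι ℂ g) = ofPartialMap g.act :=
  FreeAlgebra.lift_ι_apply _ _

theorem freePathRep_eq_of_rel {x y : FreeAlgebra ℂ (BGen p)} (h : BRel p x y) :
    freePathRep p x = freePathRep p y := by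
  induction h with
  | sum_eq_one =>
    simp only [gE, map_sum, map_add, map_one, freePathRep_ι]
    rw [← sum_ofPartialMap_fiber BIdx.tgt, Fintype.sum_prod_type]
    simp only [Fintype.sum_bool]
    rfl
  | orth s t σ τ =>
    simp only [gE, map_mul, freePathRep_ι, ofPartialMap_mul, apply_ite (freePathRep p), map_zero,
      ← ofPartialMap_none]
    split_ifs
    all_goals congr 1; funext k; simp only [act]; split_ifs <;> grind [act]
  | _ =>
    simp only [gE, gA, gB, map_mul, freePathRep_ι, ofPartialMap_mul, map_zero,
      ← ofPartialMap_none]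
    congr 1; funext k
    cases k <;> simp [act, BIdx.tgt] <;> split_ifs <;> simp_all [act, BIdx.tgt]

end BGen

namespace Balg

variable {p : ℕ}

noncomputable def gen (p : ℕ) (g : BGen p) : Balg p :=
  RingQuot.mkAlgHom ℂ (BRel p) (FreeAlgebra.ι ℂ g)

theorem adjoin_range_gen : Algebra.adjoin ℂ (Set.range (gen p)) = ⊤ := by
  rw [show gen p = RingQuot.mkAlgHom ℂ (BRel p) ∘ FreeAlgebra.ι ℂ from rfl, Set.range_comp,
    Algebra.adjoin_image, FreeAlgebra.adjoin_range_ι, Algebra.map_top, AlgHom.range_eq_top]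
  exact RingQuot.mkAlgHom_surjective ℂ (BRel p)

@[simp]
theorem mkAlgHom_gE (s : Fin p) (σ : Bool) : RingQuot.mkAlgHom ℂ (BRel p) (gE p s σ) = bE p s σ :=
  rfl

@[simp]
theorem mkAlgHom_gA (s : Fin (p - 1)) (i : Fin 2) :
    RingQuot.mkAlgHom ℂ (BRel p) (gA p s i) = bA p s i :=
  rfl

@[simp]
theorem mkAlgHom_gB (s : Fin (p - 1)) (i : Fin 2) :
    RingQuot.mkAlgHom ℂ (BRel p) (gB p s i) = bB p s i :=
  rfl

theorem one_eq_sum_bE : (1 : Balg p) = ∑ s : Fin p, (bE p s true + bE p s false) := by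
  simpa using (RingQuot.mkAlgHom_rel ℂ (BRel.sum_eq_one (p := p))).symm

theorem bE_mul_bE (s t : Fin p) (σ τ : Bool) :
    bE p s σ * bE p t τ = if (s, σ) = (t, τ) then bE p s σ else 0 := by
  simpa [apply_ite] using RingQuot.mkAlgHom_rel ℂ (BRel.orth (p := p) s t σ τ)

theorem bE_mul_self (s : Fin p) (σ : Bool) : bE p s σ * bE p s σ = bE p s σ := by
  rw [bE_mul_bE, if_pos rfl]

theorem bA_eq_sandwich (s : Fin (p - 1)) (i : Fin 2) :
    bA p s i = bE p (finIncl s) false * bA p s i * bE p (finIncl s) true := by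
  simpa using RingQuot.mkAlgHom_rel ℂ (BRel.a_sandwich (p := p) s i)

theorem bB_eq_sandwich (s : Fin (p - 1)) (i : Fin 2) :
    bB p s i = bE p (finIncl s) true * bB p s i * bE p (finIncl s) false := by
  simpa using RingQuot.mkAlgHom_rel ℂ (BRel.b_sandwich (p := p) s i)

theorem bE_mul_bA (s : Fin (p - 1)) (i : Fin 2) :
    bE p (finIncl s) false * bA p s i = bA p s i := by
  rw [bA_eq_sandwich, ← mul_assoc, ← mul_assoc, bE_mul_self]

theorem bA_mul_bE (s : Fin (p - 1)) (i : Fin 2) :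
    bA p s i * bE p (finIncl s) true = bA p s i := by
  rw [bA_eq_sandwich, mul_assoc, bE_mul_self]

theorem bE_mul_bB (s : Fin (p - 1)) (i : Fin 2) :
    bE p (finIncl s) true * bB p s i = bB p s i := by
  rw [bB_eq_sandwich, ← mul_assoc, ← mul_assoc, bE_mul_self]

theorem bB_mul_bE (s : Fin (p - 1)) (i : Fin 2) :
    bB p s i * bE p (finIncl s) false = bB p s i := by
  rw [bB_eq_sandwich, mul_assoc, bE_mul_self]

theorem bE_tgt_mul_basisElt (k : BIdx p) :
    bE p k.tgt.1 k.tgt.2 * basisElt p k = basisElt p k := by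
  cases k with
  | e s σ => exact bE_mul_self s σ
  | a s i => exact bE_mul_bA s i
  | b s i => exact bE_mul_bB s i
  | ba s => exact (mul_assoc _ _ _).symm.trans (congrArg (· * _) (bE_mul_bB s 1))
  | ab s => exact (mul_assoc _ _ _).symm.trans (congrArg (· * _) (bE_mul_bA s 1))

theorem basisElt_mul_bE_src (k : BIdx p) :
    basisElt p k * bE p k.src.1 k.src.2 = basisElt p k := by
  cases k with
  | e s σ => exact bE_mul_self s σ
  | a s i => exact bA_mul_bE s i
  | b s i => exact bB_mul_bE s i
  | ba s => exact (mul_assoc _ _ _).trans (congrArg (_ * ·) (bA_mul_bE s 0))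
  | ab s => exact (mul_assoc _ _ _).trans (congrArg (_ * ·) (bB_mul_bE s 0))

theorem bE_mul_basisElt (s : Fin p) (σ : Bool) (k : BIdx p) :
    bE p s σ * basisElt p k = if (s, σ) = k.tgt then basisElt p k else 0 := by
  conv_lhs => rw [← bE_tgt_mul_basisElt k, ← mul_assoc, bE_mul_bE]
  split_ifs with h
  · obtain ⟨rfl, rfl⟩ := Prod.mk.inj h
    exact bE_tgt_mul_basisElt k
  · exact zero_mul _

theorem basisElt_mul_basisElt_of_src_ne_tgt {k l : BIdx p} (h : k.src ≠ l.tgt) :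
    basisElt p k * basisElt p l = 0 := by
  rw [← basisElt_mul_bE_src k, ← bE_tgt_mul_basisElt l, mul_assoc, ← mul_assoc (bE p _ _),
    bE_mul_bE, if_neg h, zero_mul, mul_zero]

theorem bA_mul_bB (s : Fin (p - 1)) (i j : Fin 2) :
    bA p s i * bB p s j = if i ≠ j then basisElt p (.ab s) else 0 := by
  fin_cases i <;> fin_cases j
  · simpa using RingQuot.mkAlgHom_rel ℂ (BRel.ab_11 s)
  · simpa [basisElt] using (RingQuot.mkAlgHom_rel ℂ (BRel.ab_21 s)).symm
  · simp [basisElt]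
  · simpa using RingQuot.mkAlgHom_rel ℂ (BRel.ab_22 s)

theorem bB_mul_bA (s : Fin (p - 1)) (i j : Fin 2) :
    bB p s i * bA p s j = if i ≠ j then basisElt p (.ba s) else 0 := by
  fin_cases i <;> fin_cases j
  · simpa using RingQuot.mkAlgHom_rel ℂ (BRel.ba_11 s)
  · simpa [basisElt] using (RingQuot.mkAlgHom_rel ℂ (BRel.ba_21 s)).symm
  · simp [basisElt]
  · simpa using RingQuot.mkAlgHom_rel ℂ (BRel.ba_22 s)

theorem bA_mul_ba (s : Fin (p - 1)) (i : Fin 2) : bA p s i * basisElt p (.ba s) = 0 := by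
  rw [basisElt, ← mul_assoc, bA_mul_bB]
  split_ifs
  · rw [basisElt, mul_assoc, bB_mul_bA, if_neg (not_not.2 rfl), mul_zero]
  · exact zero_mul _

theorem bB_mul_ab (s : Fin (p - 1)) (i : Fin 2) : bB p s i * basisElt p (.ab s) = 0 := by
  rw [basisElt, ← mul_assoc, bB_mul_bA]
  split_ifs
  · rw [basisElt, mul_assoc, bA_mul_bB, if_neg (not_not.2 rfl), mul_zero]
  · exact zero_mul _

theorem basisElt_mem_span (k : BIdx p) :
    basisElt p k ∈ Submodule.span ℂ (Set.range (basisElt p)) :=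
  Submodule.subset_span (Set.mem_range_self k)

theorem bA_mul_basisElt_mem_span (s : Fin (p - 1)) (i : Fin 2) (k : BIdx p) :
    bA p s i * basisElt p k ∈ Submodule.span ℂ (Set.range (basisElt p)) := by
  change basisElt p (.a s i) * _ ∈ _
  by_cases h : (BIdx.a s i : BIdx p).src = k.tgt
  · cases k <;> simp only [BIdx.src, BIdx.tgt, Prod.mk.injEq, finIncl_inj, Bool.true_eq,
      Bool.false_eq_true, and_true, and_false] at h
    case e t τ =>
      obtain ⟨rfl, rfl⟩ := h
      exact (bA_mul_bE s i).symm ▸ basisElt_mem_span (.a s i)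
    case b t j =>
      subst h
      rw [basisElt, basisElt, bA_mul_bB]
      split_ifs
      exacts [basisElt_mem_span _, zero_mem _]
    case ba t =>
      subst h
      rw [basisElt, bA_mul_ba]
      exact zero_mem _
  · rw [basisElt_mul_basisElt_of_src_ne_tgt h]
    exact zero_mem _

theorem bB_mul_basisElt_mem_span (s : Fin (p - 1)) (i : Fin 2) (k : BIdx p) :
    bB p s i * basisElt p k ∈ Submodule.span ℂ (Set.range (basisElt p)) := by
  change basisElt p (.b s i) * _ ∈ _
  by_cases h : (BIdx.b s i : BIdx p).src = k.tgt
  · cases k <;> simp only [BIdx.src, BIdx.tgt, Prod.mk.injEq, finIncl_inj, Bool.false_eq,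
      Bool.true_eq_false, and_true, and_false] at h
    case e t τ =>
      obtain ⟨rfl, rfl⟩ := h
      exact (bB_mul_bE s i).symm ▸ basisElt_mem_span (.b s i)
    case a t j =>
      subst h
      rw [basisElt, basisElt, bB_mul_bA]
      split_ifs
      exacts [basisElt_mem_span _, zero_mem _]
    case ab t =>
      subst h
      rw [basisElt, bB_mul_ab]
      exact zero_mem _
  · rw [basisElt_mul_basisElt_of_src_ne_tgt h]
    exact zero_mem _

theorem gen_mul_basisElt_mem_span (g : BGen p) (k : BIdx p) :
    gen p g * basisElt p k ∈ Submodule.span ℂ (Set.range (basisElt p)) := by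
  cases g with
  | e s σ =>
    change bE p s σ * _ ∈ _
    rw [bE_mul_basisElt]
    split_ifs
    exacts [basisElt_mem_span k, zero_mem _]
  | a s i => exact bA_mul_basisElt_mem_span s i k
  | b s i => exact bB_mul_basisElt_mem_span s i k

theorem span_basisElt_eq_top : Submodule.span ℂ (Set.range (basisElt p)) = ⊤ := by
  refine Submodule.eq_top_of_one_mem_of_mul_mem adjoin_range_gen ?_ ?_
  · rw [one_eq_sum_bE]
    exact Submodule.sum_mem _ fun s _ => Submodule.add_mem _
      (basisElt_mem_span (.e s true)) (basisElt_mem_span (.e s false))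
  · rintro _ ⟨g, rfl⟩ m hm
    refine (Submodule.span_le (p := (Submodule.span ℂ _).comap (LinearMap.mulLeft ℂ (gen p g)))).2
      ?_ hm
    rintro _ ⟨k, rfl⟩
    exact gen_mul_basisElt_mem_span g k

noncomputable def pathRep (p : ℕ) : Balg p →ₐ[ℂ] Matrix (BIdx p) (BIdx p) ℂ :=
  RingQuot.liftAlgHom ℂ ⟨BGen.freePathRep p, fun _ _ => BGen.freePathRep_eq_of_rel⟩

theorem pathRep_gen_mulVec_single (g : BGen p) (k : BIdx p) :
    pathRep p (gen p g) *ᵥ Pi.single k 1 = (g.act k).elim 0 fun m => Pi.single m 1 := by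
  rw [pathRep, gen, RingQuot.liftAlgHom_mkAlgHom_apply, BGen.freePathRep_ι,
    ofPartialMap_mulVec_single]

theorem pathRep_basisElt_mulVec_src (k : BIdx p) :
    pathRep p (basisElt p k) *ᵥ Pi.single (.e k.src.1 k.src.2) 1 = Pi.single k 1 := by
  cases k with
  | e s σ =>
    rw [show basisElt p (.e s σ) = gen p (.e s σ) from rfl, pathRep_gen_mulVec_single]
    simp [BGen.act, BIdx.tgt, BIdx.src]
  | a s i =>
    rw [show basisElt p (.a s i) = gen p (.a s i) from rfl, pathRep_gen_mulVec_single]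
    simp [BGen.act, BIdx.src]
  | b s i =>
    rw [show basisElt p (.b s i) = gen p (.b s i) from rfl, pathRep_gen_mulVec_single]
    simp [BGen.act, BIdx.src]
  | ba s =>
    rw [show basisElt p (.ba s) = gen p (.b s 1) * gen p (.a s 0) from rfl, map_mul,
      ← mulVec_mulVec, pathRep_gen_mulVec_single]
    simp [-mulVec_single, BGen.act, BIdx.src, pathRep_gen_mulVec_single]
  | ab s =>
    rw [show basisElt p (.ab s) = gen p (.a s 1) * gen p (.b s 0) from rfl, map_mul,
      ← mulVec_mulVec, pathRep_gen_mulVec_single]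
    simp [-mulVec_single, BGen.act, BIdx.src, pathRep_gen_mulVec_single]

theorem pathRep_bE_mulVec_single (s t : Fin p) (σ τ : Bool) :
    pathRep p (bE p s σ) *ᵥ Pi.single (.e t τ) 1 =
      if (t, τ) = (s, σ) then Pi.single (.e t τ) 1 else 0 := by
  rw [show bE p s σ = gen p (.e s σ) from rfl, pathRep_gen_mulVec_single]
  simp only [BGen.act, BIdx.tgt]
  by_cases h : (t, τ) = (s, σ) <;> simp only [h, ↓reduceIte] <;> rfl

theorem pathRep_basisElt_mulVec_single_vertex (k : BIdx p) (t : Fin p) (τ : Bool) :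
    pathRep p (basisElt p k) *ᵥ Pi.single (.e t τ) 1 =
      if (t, τ) = k.src then Pi.single k 1 else 0 := by
  rw [← basisElt_mul_bE_src k, map_mul, ← mulVec_mulVec, pathRep_bE_mulVec_single]
  split_ifs with h
  · obtain ⟨rfl, rfl⟩ := Prod.mk.inj h
    exact pathRep_basisElt_mulVec_src k
  · exact mulVec_zero _

-- `x ↦ x • 1` in the path representation: it reads off the coordinates in the path basis.
noncomputable def coord (p : ℕ) : Balg p →ₗ[ℂ] BIdx p → ℂ where
  toFun x := pathRep p x *ᵥ ∑ v : Fin p × Bool, Pi.single (.e v.1 v.2) 1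
  map_add' x y := by simp [add_mulVec]
  map_smul' c x := by simp [smul_mulVec]

theorem coord_basisElt (k : BIdx p) : coord p (basisElt p k) = Pi.single k 1 := by
  simp only [coord, LinearMap.coe_mk, AddHom.coe_mk, mulVec_sum,
    pathRep_basisElt_mulVec_single_vertex]
  simp

theorem linearIndependent_basisElt : LinearIndependent ℂ (basisElt p) := by
  refine LinearIndependent.of_comp (coord p) ?_
  convert (Pi.basisFun ℂ (BIdx p)).linearIndependent
  ext k : 1
  simp [coord_basisElt]

end Balg

theorem stmt_13_general (p : ℕ) :
    FiniteDimensional ℂ (Balg p) ∧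
    Module.finrank ℂ (Balg p) = 8 * p - 6 ∧
    ∃ bas : Module.Basis (BIdx p) ℂ (Balg p), ∀ i : BIdx p, bas i = basisElt p i := by
  let bas : Module.Basis (BIdx p) ℂ (Balg p) :=
    .mk Balg.linearIndependent_basisElt Balg.span_basisElt_eq_top.ge
  have hbas (k : BIdx p) : bas k = basisElt p k := Module.Basis.mk_apply ..
  exact ⟨.of_basis bas, by rw [Module.finrank_eq_card_basis bas, BIdx.card_eq], bas, hbas⟩

/-- `B_p` is a finite-dimensional `ℂ`-vector space of dimension `8p − 6`, and a
`ℂ`-basis is given by the `2p` idempotents `e_s^±`, the `4(p−1)` elements `a_{s,1}, a_{s,2},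
b_{s,1}, b_{s,2}` `(1 ≤ s ≤ p−1)`, and the `2(p−1)` elements `b_{s,2}a_{s,1}` and
`a_{s,2}b_{s,1}` `(1 ≤ s ≤ p−1)`. -/
theorem stmt_13 (p : ℕ) (hp : 2 ≤ p) :
    FiniteDimensional ℂ (Balg p) ∧
    Module.finrank ℂ (Balg p) = 8 * p - 6 ∧
    ∃ bas : Module.Basis (BIdx p) ℂ (Balg p), ∀ i : BIdx p, bas i = basisElt p i :=
  stmt_13_general p
end
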